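/- arXiv:2412.11975 — 3 statements merged into one kernel-verified Lean document; each statement's English description precedes it below -/
import Mathlib

section
/- Let 0 → H_A →_{i_A} G_A →_{π_A} K_A → 0 and 0 → H_B →_{i_B} G_B →_{π_B} K_B → 0 be short exact sequences of abelian groups and let β : G_A → G_B be a group homomorphism. The following are equivalent: (a) there exist sections s_A of π_A and s_B of π_B (with associated retractions r_A of i_A and r_B of i_B) and group homomorphisms h̃ : H_A → H_B and k̃ : K_A → K_B such that β(g) = i_B(h̃(r_A(g))) + s_B(k̃(π_A(g))) for all g ∈ G_A (i.e. β is diagonal in these bases); (b) there exist a section s_A of π_A and a group homomorphism r_B : G_B → H_B with r_B ∘ i_B = id such that r_B ∘ β ∘ s_A = 0 and β maps the range of i_A into the range of i_B. (This is the abstract content of items (i) and (ii) of the paper's Corollary characterizing Nielsen–Thomsen diagonalisable morphisms.) -/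
/-- From a section of π build the associated retraction of i. -/
lemma exists_retraction {H G K : Type*} [AddCommGroup H] [AddCommGroup G] [AddCommGroup K]
    (i : H →+ G) (π : G →+ K) (hi : Function.Injective i) (hex : i.range = π.ker)
    (s : K →+ G) (hs : ∀ x, π (s x) = x) :
    ∃ r : G →+ H, ∀ g, i (r g) = g - s (π g) := by
  have hmem : ∀ g : G, g - s (π g) ∈ i.range := by
    intro g
    rw [hex, AddMonoidHom.mem_ker, map_sub, hs, sub_self]
  choose f hf using fun g => hmem g
  refine ⟨AddMonoidHom.mk' f ?_, fun g => hf g⟩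
  intro a b
  apply hi
  rw [map_add, hf, hf, hf, map_add, map_add]
  abel

/-- From a retraction of i build the associated section of π. -/
lemma exists_section {H G K : Type*} [AddCommGroup H] [AddCommGroup G] [AddCommGroup K]
    (i : H →+ G) (π : G →+ K) (hπ : Function.Surjective π) (hex : i.range = π.ker)
    (r : G →+ H) (hr : ∀ x, r (i x) = x) :
    ∃ s : K →+ G, (∀ x, π (s x) = x) ∧ (∀ g, s (π g) = g - i (r g)) := by
  have hker : ∀ h : H, π (i h) = 0 := by
    intro h
    have : i h ∈ π.ker := by rw [← hex]; exact ⟨h, rfl⟩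
    exact this
  choose pre hpre using hπ
  set f : K → G := fun y => pre y - i (r (pre y)) with hfdef
  have hπf : ∀ y, π (f y) = y := by
    intro y
    simp [hfdef, map_sub, hker, hpre]
  have hwell : ∀ g : G, f (π g) = g - i (r g) := by
    intro g
    have hk : pre (π g) - g ∈ π.ker := by
      rw [AddMonoidHom.mem_ker, map_sub, hpre, sub_self]
    rw [← hex] at hk
    obtain ⟨w, hw⟩ := hk
    have h1 : pre (π g) = g + i w := by rw [hw]; abel
    simp only [hfdef, h1, map_add, hr]
    abel
  refine ⟨AddMonoidHom.mk' f ?_, hπf, hwell⟩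
  intro a b
  have h1 : f (a + b) = f (π (f a + f b)) := by rw [map_add, hπf, hπf]
  rw [h1, hwell, map_add]
  have hra : r (f a) = 0 := by simp [hfdef, map_sub, hr]
  have hrb : r (f b) = 0 := by simp [hfdef, map_sub, hr]
  rw [hra, hrb, add_zero, map_zero, sub_zero]

/-- Characterization of diagonalisable morphisms between split short exact sequences
of abelian groups. -/
theorem stmt_4 {HA GA KA HB GB KB : Type*}
    [AddCommGroup HA] [AddCommGroup GA] [AddCommGroup KA]
    [AddCommGroup HB] [AddCommGroup GB] [AddCommGroup KB]
    (iA : HA →+ GA) (πA : GA →+ KA)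
    (hiA : Function.Injective iA) (hπA : Function.Surjective πA)
    (hexA : iA.range = πA.ker)
    (iB : HB →+ GB) (πB : GB →+ KB)
    (hiB : Function.Injective iB) (hπB : Function.Surjective πB)
    (hexB : iB.range = πB.ker)
    (β : GA →+ GB) :
    (∃ (sA : KA →+ GA) (rA : GA →+ HA) (sB : KB →+ GB)
        (h : HA →+ HB) (k : KA →+ KB),
        (∀ x, πA (sA x) = x) ∧ (∀ g, iA (rA g) = g - sA (πA g)) ∧
        (∀ x, πB (sB x) = x) ∧
        (∀ g, β g = iB (h (rA g)) + sB (k (πA g)))) ↔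
    (∃ (sA : KA →+ GA) (rB : GB →+ HB),
        (∀ x, πA (sA x) = x) ∧ (∀ x, rB (iB x) = x) ∧
        (∀ x, rB (β (sA x)) = 0) ∧
        (∀ x, β (iA x) ∈ Set.range iB)) := by
  have hkerA : ∀ h : HA, πA (iA h) = 0 := fun h => by
    have : iA h ∈ πA.ker := by rw [← hexA]; exact ⟨h, rfl⟩
    exact this
  have hkerB : ∀ h : HB, πB (iB h) = 0 := fun h => by
    have : iB h ∈ πB.ker := by rw [← hexB]; exact ⟨h, rfl⟩
    exact this
  constructor
  · rintro ⟨sA, rA, sB, h, k, hsA, hrA, hsB, hβ⟩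
    obtain ⟨rB, hrB⟩ := exists_retraction iB πB hiB hexB sB hsB
    have hrBiB : ∀ x, rB (iB x) = x := by
      intro x
      apply hiB
      rw [hrB, hkerB, map_zero, sub_zero]
    have hrBsB : ∀ y, rB (sB y) = 0 := by
      intro y
      apply hiB
      rw [hrB, hsB, sub_self, map_zero]
    have hrAsA : ∀ y, rA (sA y) = 0 := by
      intro y
      apply hiA
      rw [hrA, hsA, sub_self, map_zero]
    refine ⟨sA, rB, hsA, hrBiB, ?_, ?_⟩
    · intro x
      simp [hβ, hsA, hrAsA, hrBiB, hrBsB]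
    · intro x
      have hrAiA : rA (iA x) = x := by
        apply hiA
        rw [hrA, hkerA, map_zero, sub_zero]
      rw [hβ, hkerA, map_zero, map_zero, add_zero, hrAiA]
      exact ⟨h x, rfl⟩
  · rintro ⟨sA, rB, hsA, hrB, hrβs, hβi⟩
    obtain ⟨rA, hrA⟩ := exists_retraction iA πA hiA hexA sA hsA
    obtain ⟨sB, hsB, hsBwell⟩ := exists_section iB πB hπB hexB rB hrB
    refine ⟨sA, rA, sB, rB.comp (β.comp iA), πB.comp (β.comp sA), hsA, hrA, hsB, ?_⟩
    intro g
    have hg : g = iA (rA g) + sA (πA g) := by rw [hrA]; abel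
    have h1 : β (iA (rA g)) = iB (rB (β (iA (rA g)))) := by
      obtain ⟨w, hw⟩ := hβi (rA g)
      rw [← hw, hrB]
    have h2 : β (sA (πA g)) = sB (πB (β (sA (πA g)))) := by
      rw [hsBwell, hrβs, map_zero, sub_zero]
    calc β g = β (iA (rA g)) + β (sA (πA g)) := by rw [← map_add, ← hg]
      _ = iB (rB (β (iA (rA g)))) + sB (πB (β (sA (πA g)))) := by rw [← h1, ← h2]
      _ = _ := rfl
end

section
/- Let 0 → H_A →_{i_A} G_A →_{π_A} K_A → 0 and 0 → H_B →_{i_B} G_B →_{π_B} K_B → 0 be short exact sequences of abelian groups. Let β, β' : G_A → G_B and h, h' : H_A → H_B be group homomorphisms with β ∘ i_A = i_B ∘ h, β' ∘ i_A = i_B ∘ h', and π_B ∘ β = π_B ∘ β'. Let s_A, s'_A be sections of π_A, let r_B, r'_B : G_B → H_B satisfy r_B ∘ i_B = id and r'_B ∘ i_B = id, and let δ : K_A → H_A be a group homomorphism with i_A(δ(k)) = s_A(k) − s'_A(k) for all k ∈ K_A. Then (r_B ∘ (β − β') ∘ s_A) − (r'_B ∘ (β − β') ∘ s'_A) = (h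 − h') ∘ δ as homomorphisms K_A → H_B. (This is the abstract content of part (ii) of the paper's key Lemma: the difference of relative rotation maps with respect to two pairs of Nielsen–Thomsen bases equals φ̂(h_k) − ψ̂(h_k) and depends only on the bases chosen for the domain.) -/
/-- The difference of relative rotation maps with respect to two pairs of bases
only depends on the bases chosen for the domain: it equals `(h - h') ∘ δ`. -/
theorem stmt_8 {HA GA KA HB GB KB : Type*}
    [AddCommGroup HA] [AddCommGroup GA] [AddCommGroup KA]
    [AddCommGroup HB] [AddCommGroup GB] [AddCommGroup KB]
    (iA : HA →+ GA) (πA : GA →+ KA)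
    (hiA : Function.Injective iA) (hπA : Function.Surjective πA)
    (hexA : iA.range = πA.ker)
    (iB : HB →+ GB) (πB : GB →+ KB)
    (hiB : Function.Injective iB) (hπB : Function.Surjective πB)
    (hexB : iB.range = πB.ker)
    (β β' : GA →+ GB) (h h' : HA →+ HB)
    (hβ : ∀ x, β (iA x) = iB (h x)) (hβ' : ∀ x, β' (iA x) = iB (h' x))
    (hππ : ∀ g, πB (β g) = πB (β' g))
    (sA s'A : KA →+ GA) (hsA : ∀ x, πA (sA x) = x) (hs'A : ∀ x, πA (s'A x) = x)
    (rB r'B : GB →+ HB) (hrB : ∀ x, rB (iB x) = x) (hr'B : ∀ x, r'B (iB x) = x)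
    (δ : KA →+ HA) (hδ : ∀ x, iA (δ x) = sA x - s'A x) :
    ∀ x, rB (β (sA x) - β' (sA x)) - r'B (β (s'A x) - β' (s'A x))
      = h (δ x) - h' (δ x) := by
  have key : ∀ g, rB (β g - β' g) = r'B (β g - β' g) := by
    intro g
    have hmem : β g - β' g ∈ iB.range := by
      rw [hexB, AddMonoidHom.mem_ker, map_sub, hππ g, sub_self]
    obtain ⟨u, hu⟩ := hmem
    rw [← hu, hrB, hr'B]
  intro x
  rw [key (sA x), ← map_sub r'B]
  have : β (sA x) - β' (sA x) - (β (s'A x) - β' (s'A x))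
      = iB (h (δ x)) - iB (h' (δ x)) := by
    have h1 : β (sA x) - β (s'A x) = iB (h (δ x)) := by
      rw [← map_sub, ← hδ, hβ]
    have h2 : β' (sA x) - β' (s'A x) = iB (h' (δ x)) := by
      rw [← map_sub, ← hδ, hβ']
    rw [← h1, ← h2]; abel
  rw [this, map_sub, hr'B, hr'B]
end

section
/- For each n ∈ ℕ let w_n be the diagonal matrix in M_{2^n}(ℂ) whose j-th diagonal entry (0 ≤ j ≤ 2^n − 1) is exp(2πi·j/2^n), and let D_n ∈ M_{2^{n+1}}(ℂ) be the diagonal matrix whose k-th diagonal entry (0 ≤ k ≤ 2^{n+1} − 1) is exp(2πi·(k mod 2^n)/2^n) (the image of w_n under the connecting map a ↦ diag(a, a) up to the standard identification). Then there exists a unitary matrix V ∈ M_{2^{n+1}}(ℂ) such that ‖V · D_n · V* − w_{n+1}‖ ≤ π/2^n, where ‖·‖ is the operator norm on M_{2^{n+1}}(ℂ) induced by the ℓ² norm on ℂ^{2^{n+1}}. (This estimate is what makes the sequence (φ_{n∞}(w_n))_n Cauchy in the unitary distance, so that it converges to a unitary w of M_{2^∞} in the paper's construction of the Robert examples.) 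-/
/-!
Conjugating by the permutation matrix of the perfect unshuffle of `Fin (2 ^ (n + 1))` turns `D_n`
into the diagonal matrix with entries `exp (2πi ⌊j/2⌋ / 2 ^ n)`. Its `j`-th entry differs from that
of `w_{n+1}` by a phase of `π (j % 2) / 2 ^ n`, chord length is at most arc length, and the
operator norm of a diagonal matrix is the sup norm of its diagonal.
-/

open Complex Matrix
open scoped Matrix.Norms.L2Operator

theorem Complex.norm_exp_ofReal_mul_I_sub_exp_ofReal_mul_I_le (a b : ℝ) :
    ‖exp (a * I) - exp (b * I)‖ ≤ |a - b| := by
  have h : exp (a * I) - exp (b * I) = exp (b * I) * (exp (I * ↑(a - b)) - 1) := by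
    rw [mul_sub, ← exp_add, mul_one]
    push_cast
    ring_nf
  rw [h, norm_mul, norm_exp_ofReal_mul_I, one_mul]
  exact Real.norm_exp_I_mul_ofReal_sub_one_le

namespace Matrix

variable {n R : Type*} [Fintype n] [DecidableEq n]

theorem permMatrix_mem_unitaryGroup [CommRing R] [StarRing R] (σ : Equiv.Perm n) :
    σ.permMatrix R ∈ unitaryGroup n R := by
  rw [mem_unitaryGroup_iff, star_eq_conjTranspose, conjTranspose_permMatrix, ← permMatrix_mul,
    inv_mul_cancel, permMatrix_one]

theorem permMatrix_mul_diagonal_mul_star [NonAssocSemiring R] [StarRing R] (σ : Equiv.Perm n)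
    (d : n → R) :
    σ.permMatrix R * diagonal d * star (σ.permMatrix R) = diagonal (d ∘ σ) := by
  rw [star_eq_conjTranspose, conjTranspose_permMatrix, Equiv.Perm.permMatrix,
    Equiv.Perm.permMatrix, PEquiv.toMatrix_toPEquiv_mul, PEquiv.mul_toMatrix_toPEquiv,
    submatrix_submatrix, Function.id_comp, Function.comp_id, Equiv.Perm.inv_def, Equiv.symm_symm,
    submatrix_diagonal_equiv]

end Matrix

/-- `j ↦ j / 2 + 2 ^ n * (j % 2)`. -/
def Fin.unshuffle (n : ℕ) : Equiv.Perm (Fin (2 ^ (n + 1))) :=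
  (finCongr (pow_succ 2 n)).trans <| finProdFinEquiv.symm.trans <| (Equiv.prodComm _ _).trans <|
    finProdFinEquiv.trans (finCongr (pow_succ' 2 n).symm)

theorem Fin.unshuffle_val_mod (n : ℕ) (j : Fin (2 ^ (n + 1))) :
    (Fin.unshuffle n j : ℕ) % 2 ^ n = j / 2 := by
  have hj : (j : ℕ) / 2 < 2 ^ n := by have : (j : ℕ) < 2 ^ n * 2 := pow_succ 2 n ▸ j.isLt; omega
  simp [Fin.unshuffle, Nat.mod_eq_of_lt hj]

theorem norm_exp_two_pi_I_half_sub_le (n j : ℕ) :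
    ‖exp (2 * (Real.pi : ℂ) * I * ((j / 2 : ℕ) : ℂ) / (2 : ℂ) ^ n)
      - exp (2 * (Real.pi : ℂ) * I * (j : ℂ) / (2 : ℂ) ^ (n + 1))‖ ≤ Real.pi / 2 ^ n := by
  have hphase (x k : ℕ) : 2 * (Real.pi : ℂ) * I * (x : ℂ) / (2 : ℂ) ^ k
      = ((2 * Real.pi * x / 2 ^ k : ℝ) : ℂ) * I := by
    push_cast; ring
  have hdiff : 2 * Real.pi * ((j / 2 : ℕ) : ℝ) / 2 ^ n - 2 * Real.pi * (j : ℝ) / 2 ^ (n + 1)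
      = -(Real.pi * ((j % 2 : ℕ) : ℝ) / 2 ^ n) := by
    have hj : (j : ℝ) = 2 * ((j / 2 : ℕ) : ℝ) + ((j % 2 : ℕ) : ℝ) := by
      exact_mod_cast (Nat.div_add_mod j 2).symm
    rw [hj, pow_succ]
    field_simp
    ring
  have hrem : ((j % 2 : ℕ) : ℝ) ≤ 1 := by exact_mod_cast Nat.le_of_lt_succ (Nat.mod_lt j two_pos)
  rw [hphase, hphase]
  refine (norm_exp_ofReal_mul_I_sub_exp_ofReal_mul_I_le _ _).trans ?_
  rw [hdiff, abs_neg, abs_of_nonneg (by positivity)]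
  gcongr
  exact mul_le_of_le_one_right Real.pi_pos.le hrem

/-- The image of the diagonal unitary `w_n` under the connecting map
`a ↦ diag (a, a)` is, up to unitary conjugation, at operator-norm distance at most
`π / 2 ^ n` from `w_{n+1}`. -/
theorem stmt_10 (n : ℕ) :
    ∃ V : Matrix (Fin (2 ^ (n + 1))) (Fin (2 ^ (n + 1))) ℂ,
      V ∈ Matrix.unitaryGroup (Fin (2 ^ (n + 1))) ℂ ∧
      ‖Matrix.toEuclideanCLM (𝕜 := ℂ)
          (V * (Matrix.diagonal fun k : Fin (2 ^ (n + 1)) =>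
              Complex.exp (2 * (Real.pi : ℂ) * Complex.I
                * (((k : ℕ) % 2 ^ n : ℕ) : ℂ) / ((2 : ℂ) ^ n))) * star V
          - Matrix.diagonal fun j : Fin (2 ^ (n + 1)) =>
              Complex.exp (2 * (Real.pi : ℂ) * Complex.I
                * ((j : ℕ) : ℂ) / ((2 : ℂ) ^ (n + 1))))‖
        ≤ Real.pi / 2 ^ n := by
  refine ⟨(Fin.unshuffle n).permMatrix ℂ, permMatrix_mem_unitaryGroup _, ?_⟩
  rw [permMatrix_mul_diagonal_mul_star, diagonal_sub, l2_opNorm_toEuclideanCLM, l2_opNorm_diagonal,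
    pi_norm_le_iff_of_nonneg (by positivity)]
  intro j
  simp only [Function.comp_apply, Fin.unshuffle_val_mod]
  exact norm_exp_two_pi_I_half_sub_le n j
end
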